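/- arXiv:1802.05542 — 5 statements merged into one kernel-verified Lean document; each statement's English description precedes it below -/
import Mathlib

section
/- For every positive natural number n, the 2-adic valuation of the Pell number P_n equals the 2-adic valuation of n, and the associated Pell number Q_n is odd. -/
def pellP : ℕ → ℕ
  | 0 => 0
  | 1 => 1
  | n + 2 => 2 * pellP (n + 1) + pellP n

def pellQ : ℕ → ℕ
  | 0 => 1
  | 1 => 1
  | n + 2 => 2 * pellQ (n + 1) + pellQ n

/-!
For odd `n` both valuations vanish, since `P_n ≡ n (mod 2)`. For even indices the doubling formula
`P_{2n} = 2 P_n Q_n`, which follows from the addition law `P_{m+n+1} = P_{m+1} P_{n+1} + P_m P_n`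
and `Q_{n+1} = P_{n+1} + P_n`, raises the valuation by exactly one because every `Q_n` is odd.
-/

lemma pellP_add_two (n : ℕ) : pellP (n + 2) = 2 * pellP (n + 1) + pellP n := rfl

lemma pellQ_add_two (n : ℕ) : pellQ (n + 2) = 2 * pellQ (n + 1) + pellQ n := rfl

lemma pellQ_odd : ∀ n, Odd (pellQ n)
  | 0 | 1 => odd_one
  | n + 2 => by
    rw [pellQ_add_two]
    exact (even_two_mul _).add_odd (pellQ_odd n)

lemma pellP_mod_two : ∀ n, pellP n % 2 = n % 2
  | 0 | 1 => rfl
  | n + 2 => by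
    have := pellP_mod_two n
    rw [pellP_add_two]
    omega

lemma pellP_pos : ∀ {n}, 0 < n → 0 < pellP n
  | 1, _ => Nat.one_pos
  | n + 2, _ => by
    have := pellP_pos (n := n + 1) n.succ_pos
    rw [pellP_add_two]
    omega

lemma pellQ_succ_eq_pellP_add : ∀ n, pellQ (n + 1) = pellP (n + 1) + pellP n
  | 0 | 1 => rfl
  | n + 2 => by
    rw [pellQ_add_two, pellQ_succ_eq_pellP_add (n + 1), pellQ_succ_eq_pellP_add n,
      pellP_add_two (n + 1), pellP_add_two n]
    ring

lemma pellP_add_add_one (m n : ℕ) :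
    pellP (m + n + 1) = pellP (m + 1) * pellP (n + 1) + pellP m * pellP n := by
  induction m using Nat.twoStepInduction with
  | zero => simp [pellP]
  | one => rw [add_comm 1 n, pellP_add_two]; simp [pellP]
  | more m ih₀ ih₁ =>
    rw [show m + 2 + n + 1 = m + n + 1 + 2 by ring, pellP_add_two,
      show m + n + 1 + 1 = m + 1 + n + 1 by ring, ih₁, ih₀]
    simp only [pellP_add_two]
    ring

lemma pellP_two_mul (n : ℕ) : pellP (2 * n) = 2 * pellP n * pellQ n := by
  cases n with
  | zero => rfl
  | succ n =>
    rw [show 2 * (n + 1) = n + 1 + n + 1 by ring, pellP_add_add_one, pellQ_succ_eq_pellP_add,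
      pellP_add_two]
    ring

lemma factorization_pellP_two (n : ℕ) : (pellP n).factorization 2 = n.factorization 2 := by
  induction n using Nat.strong_induction_on with
  | _ n ih =>
  obtain ⟨m, rfl | rfl⟩ := Nat.even_or_odd' n
  · rcases m.eq_zero_or_pos with rfl | hm
    · rfl
    have hP : pellP m ≠ 0 := (pellP_pos hm).ne'
    have hQ : ¬ 2 ∣ pellQ m := (pellQ_odd m).not_two_dvd_nat
    rw [pellP_two_mul, Nat.factorization_mul (by positivity) (by omega),
      Nat.factorization_mul two_ne_zero hP, Nat.factorization_mul two_ne_zero hm.ne']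
    simp [ih m (by omega), Nat.factorization_eq_zero_of_not_dvd hQ]
  · have hP : ¬ 2 ∣ pellP (2 * m + 1) := by have := pellP_mod_two (2 * m + 1); omega
    rw [Nat.factorization_eq_zero_of_not_dvd hP, Nat.factorization_eq_zero_of_not_dvd (by omega)]

theorem pell_two_adic_general (n : ℕ) :
    (pellP n).factorization 2 = n.factorization 2 ∧ Odd (pellQ n) :=
  ⟨factorization_pellP_two n, pellQ_odd n⟩

theorem pell_two_adic (n : ℕ) (hn : 0 < n) :
    (pellP n).factorization 2 = n.factorization 2 ∧ Odd (pellQ n) :=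
  pell_two_adic_general n
end

section
/- For a natural number n, 3 divides the associated Pell number Q_n if and only if n ≡ 2 (mod 4). -/
lemma pellQ_add_four (n : ℕ) : pellQ (n + 4) = 12 * pellQ (n + 1) + 5 * pellQ n := by
  simp only [pellQ]
  ring

lemma three_dvd_pellQ_add_four_add_pellQ (n : ℕ) : 3 ∣ pellQ (n + 4) + pellQ n :=
  ⟨4 * pellQ (n + 1) + 2 * pellQ n, by rw [pellQ_add_four]; ring⟩

lemma three_dvd_pellQ_add_four_iff (n : ℕ) : 3 ∣ pellQ (n + 4) ↔ 3 ∣ pellQ n :=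
  ⟨fun h => (Nat.dvd_add_right h).mp (three_dvd_pellQ_add_four_add_pellQ n),
    fun h => (Nat.dvd_add_left h).mp (three_dvd_pellQ_add_four_add_pellQ n)⟩

lemma three_dvd_pellQ_add_four_mul_iff (r k : ℕ) : 3 ∣ pellQ (r + 4 * k) ↔ 3 ∣ pellQ r := by
  induction k with
  | zero => rfl
  | succ k ih => rw [Nat.mul_succ, ← Nat.add_assoc, three_dvd_pellQ_add_four_iff, ih]

theorem three_dvd_pellQ_iff (n : ℕ) : 3 ∣ pellQ n ↔ n % 4 = 2 := by
  have hperiodic := three_dvd_pellQ_add_four_mul_iff (n % 4) (n / 4)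
  rw [Nat.mod_add_div] at hperiodic
  rw [hperiodic]
  have hlt : n % 4 < 4 := Nat.mod_lt n (by norm_num)
  interval_cases n % 4 <;> decide
end

section
/- For every natural number n, 5 does not divide the associated Pell number Q_n. -/
theorem pellP_succ_and_pellQ_succ (n : ℕ) :
    pellP (n + 1) = pellP n + pellQ n ∧ pellQ (n + 1) = pellQ n + 2 * pellP n := by
  induction n with
  | zero => exact ⟨rfl, rfl⟩
  | succ n ih =>
    obtain ⟨hP, hQ⟩ := ih
    constructor
    · rw [pellP, hP, hQ]; ring
    · rw [pellQ, hP, hQ]; ring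

theorem pellQ_sq_sub_two_mul_pellP_sq (n : ℕ) :
    (pellQ n : ℤ) ^ 2 - 2 * (pellP n : ℤ) ^ 2 = (-1) ^ n := by
  induction n with
  | zero => simp [pellP, pellQ]
  | succ n ih =>
    obtain ⟨hP, hQ⟩ := pellP_succ_and_pellQ_succ n
    rw [hP, hQ, pow_succ]
    push_cast
    linear_combination -ih

theorem isSquare_two_or_isSquare_neg_two_of_dvd_pellQ {p n : ℕ} (h : p ∣ pellQ n) :
    IsSquare (2 : ZMod p) ∨ IsSquare (-2 : ZMod p) := by
  have hQ : (pellQ n : ZMod p) = 0 := (ZMod.natCast_eq_zero_iff _ _).mpr h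
  have hpell : (2 * pellP n : ZMod p) ^ 2 = -2 * (-1) ^ n := by
    have := congrArg (Int.cast : ℤ → ZMod p) (pellQ_sq_sub_two_mul_pellP_sq n)
    push_cast [hQ] at this
    linear_combination -2 * this
  rcases neg_one_pow_eq_or (ZMod p) n with hn | hn
  · exact .inr ⟨_, by rw [← sq, hpell, hn, mul_one]⟩
  · exact .inl ⟨_, by rw [← sq, hpell, hn]; ring⟩

theorem Nat.Prime.not_dvd_pellQ_of_mod_eight_eq_five {p : ℕ} [Fact p.Prime] (hp : p % 8 = 5)
    (n : ℕ) : ¬ p ∣ pellQ n := by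
  have hp2 : p ≠ 2 := by omega
  rintro h
  rcases isSquare_two_or_isSquare_neg_two_of_dvd_pellQ h with h2 | h2
  · have := (ZMod.exists_sq_eq_two_iff hp2).mp h2; omega
  · have := (ZMod.exists_sq_eq_neg_two_iff hp2).mp h2; omega

theorem five_not_dvd_pellQ (n : ℕ) : ¬ (5 ∣ pellQ n) :=
  haveI : Fact (Nat.Prime 5) := ⟨Nat.prime_five⟩
  Nat.Prime.not_dvd_pellQ_of_mod_eight_eq_five rfl n
end

section
/- There is no natural number n > 16 such that φ(Q_n) = 6·(10^m − 1)/9 for some m ≥ 2, where Q_n is the n-th associated Pell number. -/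
/-!
The repdigit 66…6 is ≡ 2 (mod 4) and Q_n is odd, so φ(Q_n) ≡ 2 (mod 4) forces Q_n = p^k to be a
prime power: two distinct odd prime factors p, q of Q_n would give (p - 1)(q - 1) ∣ φ(Q_n).
For m = 2 this yields p^k ≤ 2 φ(p^k) = 132, too small for n > 16. For m ≥ 3 the repdigit is
≡ 26 (mod 80); then p ∤ 10, and since (ℤ/80ℤ)ˣ has exponent 4, the congruence
p^(k-1) (p - 1) ≡ 26 forces p^k ≡ 27 or 49 (mod 80). These residues never occur in Q_n, which
has period 24 modulo 80.
-/

open Nat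

theorem Function.periodic_of_two_step_recurrence {R : Type*} [Semiring R] {f : ℕ → R} {a b : R}
    {N : ℕ} (hf : ∀ n, f (n + 2) = a * f (n + 1) + b * f n) (h0 : f N = f 0)
    (h1 : f (N + 1) = f 1) : Function.Periodic f N := by
  intro n
  induction n using Nat.twoStepInduction with
  | zero => rwa [zero_add]
  | one => rwa [add_comm]
  | more n ih0 ih1 =>
    rw [show n + 2 + N = n + N + 2 by omega, hf, hf, show n + N + 1 = n + 1 + N by omega, ih0, ih1]

theorem odd_pellQ (n : ℕ) : Odd (pellQ n) := by
  induction n using Nat.twoStepInduction with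
  | zero | one => exact odd_one
  | more n ih0 _ => exact (even_two_mul _).add_odd ih0

theorem two_pow_le_pellQ_succ (n : ℕ) : 2 ^ n ≤ pellQ (n + 1) := by
  induction n using Nat.twoStepInduction with
  | zero | one => decide
  | more n _ ih1 =>
    rw [pow_succ, pellQ]
    lia

theorem pellQ_cast_periodic : Function.Periodic (fun n ↦ (pellQ n : ZMod 80)) 24 :=
  Function.periodic_of_two_step_recurrence (a := 2) (b := 1) (fun n ↦ by simp [pellQ])
    (by decide) (by decide)

theorem pellQ_cast_ne (n : ℕ) : (pellQ n : ZMod 80) ≠ 27 ∧ (pellQ n : ZMod 80) ≠ 49 := by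
  rw [← pellQ_cast_periodic.map_mod_nat n]
  exact (by decide : ∀ s < 24, (pellQ s : ZMod 80) ≠ 27 ∧ (pellQ s : ZMod 80) ≠ 49) _
    (n.mod_lt (by norm_num))

theorem repdigit_six_mod_four {x m : ℕ} (hm : 2 ≤ m) (h : 9 * x = 6 * (10 ^ m - 1)) :
    x % 4 = 2 := by
  have : 10 ^ m = 100 * 10 ^ (m - 2) := by rw [← pow_sub_mul_pow 10 hm]; ring
  have : 1 ≤ 10 ^ (m - 2) := one_le_pow _ _ (by norm_num)
  omega

theorem repdigit_six_cast_zmod_eighty {x m : ℕ} (hm : 3 ≤ m) (h : 9 * x = 6 * (10 ^ m - 1)) :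
    (x : ZMod 80) = 26 := by
  refine (ZMod.natCast_eq_natCast_iff' x 26 80).2 ?_
  have : 10 ^ m = 1000 * 10 ^ (m - 3) := by rw [← pow_sub_mul_pow 10 hm]; ring
  have : 1 ≤ 10 ^ (m - 3) := one_le_pow _ _ (by norm_num)
  omega

theorem isPrimePow_of_odd_of_totient_mod_four {n : ℕ} (hn : Odd n) (h : φ n % 4 = 2) :
    IsPrimePow n := by
  have hn1 : n ≠ 1 := by rintro rfl; simp at h
  obtain ⟨p, hp, hpn⟩ := Nat.exists_prime_and_dvd hn1
  refine isPrimePow_iff_unique_prime_dvd.2 ⟨p, ⟨hp, hpn⟩, fun q ⟨hq, hqn⟩ ↦ ?_⟩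
  by_contra hqp
  have hcop : p.Coprime q := (Nat.coprime_primes hp hq).2 (Ne.symm hqp)
  have hdvd : (p - 1) * (q - 1) ∣ φ n := by
    rw [← totient_prime hp, ← totient_prime hq, ← totient_mul hcop]
    exact totient_dvd_of_dvd (hcop.mul_dvd_of_dvd_of_dvd hpn hqn)
  obtain ⟨a, rfl⟩ := hn.of_dvd_nat hpn
  obtain ⟨b, rfl⟩ := hn.of_dvd_nat hqn
  have : 4 ∣ φ n :=
    Dvd.dvd.trans ⟨a * b, by rw [Nat.add_sub_cancel, Nat.add_sub_cancel]; ring⟩ hdvd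
  omega

theorem prime_pow_le_two_mul_totient {p : ℕ} (hp : p.Prime) (k : ℕ) : p ^ k ≤ 2 * φ (p ^ k) := by
  rcases k with _ | k
  · simp
  rw [totient_prime_pow_succ hp, pow_succ]
  have := hp.two_le
  calc p ^ k * p ≤ p ^ k * (2 * (p - 1)) := Nat.mul_le_mul_left _ (by omega)
    _ = 2 * (p ^ k * (p - 1)) := by ring

theorem units_zmod_eighty_pow_four (u : (ZMod 80)ˣ) : u ^ 4 = 1 := by
  have key : ∀ x y : ZMod 80, x * y = 1 → x ^ 4 = 1 := by
    set_option maxRecDepth 100000 in decide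
  exact Units.ext (by simpa using key u ↑u⁻¹ u.mul_inv)

theorem prime_pow_cast_eq_of_totient_cast_eq {p k : ℕ} (hp : p.Prime) (hp2 : p ≠ 2) (hk : k ≠ 0)
    (h : (φ (p ^ k) : ZMod 80) = 26) : (p : ZMod 80) ^ k = 27 ∨ (p : ZMod 80) ^ k = 49 := by
  rw [totient_prime_pow hp (pos_of_ne_zero hk)] at h
  have hp5 : p ≠ 5 := by
    rintro rfl
    replace h := (ZMod.natCast_eq_natCast_iff' _ 26 80).1 h
    rcases (by omega : k = 1 ∨ 2 ≤ k) with rfl | hk2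
    · norm_num at h
    · have : 5 ∣ 5 ^ (k - 1) * (5 - 1) := (dvd_pow_self 5 (by omega)).mul_right _
      omega
  have hcop : p.Coprime (2 ^ 4 * 5) :=
    (((coprime_primes hp prime_two).2 hp2).pow_right 4).mul_right
      ((coprime_primes hp prime_five).2 hp5)
  have hu : (p : ZMod 80) ^ 4 = 1 := by
    simpa using congrArg Units.val (units_zmod_eighty_pow_four (ZMod.unitOfCoprime p hcop))
  have key : ∀ u : ZMod 80, u ^ 4 = 1 → ∀ r < 4,
      u ^ r * (u - 1) = 26 → u ^ r * u = 27 ∨ u ^ r * u = 49 := by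
    decide
  have hsplit : (p : ZMod 80) ^ k = (p : ZMod 80) ^ ((k - 1) % 4) * p := by
    rw [← pow_eq_pow_mod _ hu, ← pow_succ, Nat.sub_add_cancel (pos_of_ne_zero hk)]
  push_cast [Nat.cast_sub hp.one_le] at h
  rw [pow_eq_pow_mod _ hu] at h
  rw [hsplit]
  exact key _ hu _ (Nat.mod_lt _ (by norm_num)) h

theorem no_repdigit_six_totient_pellQ :
    ¬ ∃ (n m : ℕ), 16 < n ∧ 2 ≤ m ∧ 9 * Nat.totient (pellQ n) = 6 * (10 ^ m - 1) := by
  rintro ⟨n, m, hn, hm, h⟩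
  obtain ⟨p, k, hp, hk, hQ⟩ := (isPrimePow_nat_iff _).1 <|
    isPrimePow_of_odd_of_totient_mod_four (odd_pellQ n) (repdigit_six_mod_four hm h)
  rcases hm.eq_or_lt with rfl | hm3
  · have hsmall := prime_pow_le_two_mul_totient hp k
    rw [hQ] at hsmall
    obtain ⟨j, rfl⟩ : ∃ j, n = j + 1 := ⟨n - 1, by omega⟩
    have hlarge := (Nat.pow_le_pow_right (by norm_num) (by omega : 16 ≤ j)).trans
      (two_pow_le_pellQ_succ j)
    omega
  · have hp2 : p ≠ 2 := by
      rintro rfl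
      exact (Nat.not_even_iff_odd.2 (odd_pellQ n)) (hQ ▸ (Nat.even_pow.2 ⟨even_two, hk.ne'⟩))
    have h80 := prime_pow_cast_eq_of_totient_cast_eq hp hp2 hk.ne'
      (hQ ▸ repdigit_six_cast_zmod_eighty hm3 h)
    rw [← Nat.cast_pow, hQ] at h80
    exact h80.elim (pellQ_cast_ne n).1 (pellQ_cast_ne n).2
end

section
/- There do not exist a positive integer n and a positive integer m ≥ 1 such that P_n is prime and 9·P_n − 1 = 8·10^m, where P_n is the n-th Pell number. -/
section Period

variable {R : Type*} [Semiring R] {p : ℕ}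

theorem pellP_add_period_cast (h₀ : (pellP p : R) = 0) (h₁ : (pellP (p + 1) : R) = 1) (n : ℕ) :
    (pellP (n + p) : R) = pellP n := by
  induction n using Nat.twoStepInduction with
  | zero => simpa [pellP] using h₀
  | one => simpa [pellP, add_comm] using h₁
  | more k ih₀ ih₁ =>
    rw [show k + 2 + p = (k + p) + 2 by omega, pellP, pellP, show k + p + 1 = k + 1 + p by omega]
    push_cast
    rw [ih₀, ih₁]

theorem pellP_cast_eq_pellP_mod (h₀ : (pellP p : R) = 0) (h₁ : (pellP (p + 1) : R) = 1)
    (n : ℕ) : (pellP n : R) = pellP (n % p) := by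
  conv_lhs => rw [← Nat.mod_add_div n p]
  induction n / p with
  | zero => simp
  | succ q ih => rw [mul_add_one, ← add_assoc, pellP_add_period_cast h₀ h₁, ih]

end Period

theorem nine_mul_pellP_zmod_fiftyfive_ne (n : ℕ) :
    9 * (pellP n : ZMod 55) ≠ 26 ∧ 9 * (pellP n : ZMod 55) ≠ 31 := by
  rw [pellP_cast_eq_pellP_mod (p := 24) (by decide) (by decide)]
  have key : ∀ r : Fin 24, 9 * (pellP r : ZMod 55) ≠ 26 ∧ 9 * (pellP r : ZMod 55) ≠ 31 := by
    decide
  exact key ⟨n % 24, Nat.mod_lt n (by norm_num)⟩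

theorem eight_mul_ten_pow_add_one_zmod_fiftyfive {m : ℕ} (hm : 1 ≤ m) :
    8 * (10 : ZMod 55) ^ m + 1 = 26 ∨ 8 * (10 : ZMod 55) ^ m + 1 = 31 := by
  induction m, hm using Nat.le_induction with
  | base => decide
  | succ k _ ih =>
    rw [pow_succ, show 8 * ((10 : ZMod 55) ^ k * 10) + 1 = 10 * (8 * 10 ^ k + 1) - 9 by ring]
    rcases ih with h | h <;> rw [h] <;> decide

theorem no_prime_pellP_repdigit_eight :
    ¬ ∃ (n m : ℕ), 0 < n ∧ 1 ≤ m ∧ (pellP n).Prime ∧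
      9 * pellP n - 1 = 8 * 10 ^ m := by
  rintro ⟨n, m, -, hm, -, h⟩
  have hpow : 0 < 10 ^ m := by positivity
  have h' : 9 * pellP n = 8 * 10 ^ m + 1 := by omega
  have hmod : 9 * (pellP n : ZMod 55) = 8 * 10 ^ m + 1 := by exact_mod_cast congrArg Nat.cast h'
  obtain ⟨h26, h31⟩ := nine_mul_pellP_zmod_fiftyfive_ne n
  rcases eight_mul_ten_pow_add_one_zmod_fiftyfive hm with h | h <;> rw [h] at hmod
  · exact h26 hmod
  · exact h31 hmod
end
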